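/- arXiv:math/0112256 — 3 statements merged into one kernel-verified Lean document; each statement's English description precedes it below -/
import Mathlib

section
/- If a real symmetric n×n matrix A has all eigenvalues in the cone Γ_k^+ (i.e., σ_j(A) > 0 for all j ≤ k), then the Newton transformation T_{k-1}(A) is positive definite. -/
/-
Diagonalising `A` by the spectral theorem, `T_{k-1}(A)` acts on the `i`-th eigenvector by
`∑_j (-1)^j σ_{k-1-j}(λ) λ_i^j = σ_{k-1}(λ | i)`, the elementary symmetric function of the
eigenvalues other than `λ_i`. Its positivity on `Γ_k` follows by induction on `k` from
`σ_{j+1}(λ) = σ_{j+1}(λ | i) + λ_i σ_j(λ | i)` together with Newton's inequality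
`σ_j σ_{j+2} ≤ σ_{j+1}^2`. The latter holds for every real vector: `∏ (X + λ_a)` and all its
derivatives are real-rooted, and a real-rooted `p` satisfies Laguerre's inequality `p'' p ≤ p'^2`.
-/

open Finset

noncomputable def esymm (n k : ℕ) (x : Fin n → ℝ) : ℝ :=
  ∑ s ∈ (Finset.univ : Finset (Fin n)).powersetCard k, ∏ i ∈ s, x i

/-- σ_k(A): k-th elementary symmetric function of the eigenvalues,
equivalently the t^k coefficient in det(I + tA). -/
noncomputable def sigmaMat (n k : ℕ) (A : Matrix (Fin n) (Fin n) ℝ) : ℝ :=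
  (-1 : ℝ) ^ k * (A.charpoly.coeff (n - k))

/-- The k-th Newton transformation T_k(A) = ∑_{i≤k} (-1)^i σ_{k-i}(A) A^i. -/
noncomputable def newtonT (n k : ℕ) (A : Matrix (Fin n) (Fin n) ℝ) :
    Matrix (Fin n) (Fin n) ℝ :=
  ∑ i ∈ Finset.range (k + 1), ((-1 : ℝ) ^ i * sigmaMat n (k - i) A) • A ^ i

open Polynomial Matrix
open scoped ComplexOrder

namespace Polynomial

theorem Splits.derivative_real {p : ℝ[X]} (hp : p.Splits) : p.derivative.Splits := by
  rw [splits_iff_card_roots] at hp ⊢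
  have := p.card_roots_le_derivative
  have := p.derivative.card_roots'
  have := p.natDegree_derivative_le
  omega

theorem Splits.iterate_derivative_real {p : ℝ[X]} (hp : p.Splits) (d : ℕ) :
    (derivative^[d] p).Splits := by
  induction d with
  | zero => exact hp
  | succ d ih => rw [Function.iterate_succ_apply']; exact ih.derivative_real

theorem eval_derivative_derivative_mul_eval_le_sq_X_sub_C_mul {q : ℝ[X]} {x : ℝ}
    (hq : eval x (derivative (derivative q)) * eval x q ≤ eval x (derivative q) ^ 2) (r : ℝ) :
    eval x (derivative (derivative ((X - C r) * q))) * eval x ((X - C r) * q) ≤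
      eval x (derivative ((X - C r) * q)) ^ 2 := by
  simp only [derivative_mul, derivative_add, derivative_sub, derivative_X, derivative_C,
    sub_zero, one_mul, eval_add, eval_mul, eval_sub, eval_X, eval_C]
  generalize eval x q = a at hq ⊢
  generalize eval x (derivative q) = b at hq ⊢
  generalize eval x (derivative (derivative q)) = e at hq ⊢
  nlinarith [sq_nonneg a, mul_nonneg (sq_nonneg (x - r)) (sub_nonneg.2 hq)]

theorem Splits.eval_derivative_derivative_mul_eval_le_sq {p : ℝ[X]} (hp : p.Splits) (x : ℝ) :
    eval x (derivative (derivative p)) * eval x p ≤ eval x (derivative p) ^ 2 := by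
  have hprod (m : Multiset ℝ) :
      let q := (m.map fun r => X - C r).prod
      eval x (derivative (derivative q)) * eval x q ≤ eval x (derivative q) ^ 2 := by
    induction m using Multiset.induction_on with
    | empty => simp
    | cons r m ih =>
      simpa only [Multiset.map_cons, Multiset.prod_cons] using
        eval_derivative_derivative_mul_eval_le_sq_X_sub_C_mul ih r
  rw [hp.eq_prod_roots]
  simp only [derivative_C_mul, eval_mul, eval_C]
  nlinarith [hprod p.roots, sq_nonneg p.leadingCoeff]

theorem Splits.coeff_mul_coeff_le_sq {p : ℝ[X]} (hp : p.Splits) (d : ℕ) :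
    p.coeff d * p.coeff (d + 2) ≤ p.coeff (d + 1) ^ 2 := by
  -- Laguerre at `0` for `derivative^[d] p`: its `i`-th derivative at `0` is
  -- `(d + i)! * p.coeff (d + i)`
  have key := (hp.iterate_derivative_real d).eval_derivative_derivative_mul_eval_le_sq 0
  simp only [← Function.iterate_succ_apply' derivative, ← coeff_zero_eq_eval_zero,
    coeff_iterate_derivative, zero_add, nsmul_eq_mul, Nat.descFactorial_self] at key
  rw [Nat.factorial_succ (d + 1), Nat.factorial_succ d] at key
  push_cast at key
  set c₀ := p.coeff d
  set c₁ := p.coeff (d + 1)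
  set c₂ := p.coeff (d + 2)
  have hscale : (0 : ℝ) < (d + 1) * d.factorial ^ 2 := by positivity
  have hweighted : (d + 2) * (c₀ * c₂) ≤ (d + 1) * c₁ ^ 2 := by
    refine le_of_mul_le_mul_left ?_ hscale
    linear_combination key
  nlinarith [sq_nonneg c₁]

end Polynomial

namespace Multiset

variable {R : Type*}

theorem esymm_zero [CommSemiring R] (s : Multiset R) : s.esymm 0 = 1 := by
  simp [esymm]

theorem esymm_eq_zero_of_card_lt [CommSemiring R] {s : Multiset R} {k : ℕ} (h : card s < k) :
    s.esymm k = 0 := by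
  simp [esymm, powersetCard_eq_empty _ h]

theorem esymm_cons_succ [CommSemiring R] (a : R) (s : Multiset R) (k : ℕ) :
    (a ::ₘ s).esymm (k + 1) = s.esymm (k + 1) + a * s.esymm k := by
  simp [esymm, powersetCard_cons, map_map, prod_cons, sum_map_mul_left]

theorem sum_range_neg_one_pow_mul_esymm_cons_mul_pow [CommRing R] (a : R) (s : Multiset R)
    (k : ℕ) :
    ∑ j ∈ Finset.range (k + 1), (-1) ^ j * (a ::ₘ s).esymm (k - j) * a ^ j = s.esymm k := by
  induction k with
  | zero => simp [esymm_zero]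
  | succ k ih =>
    have hshift : ∑ j ∈ Finset.range (k + 1),
          (-1) ^ (j + 1) * (a ::ₘ s).esymm (k + 1 - (j + 1)) * a ^ (j + 1) =
        -a * ∑ j ∈ Finset.range (k + 1), (-1) ^ j * (a ::ₘ s).esymm (k - j) * a ^ j := by
      rw [Finset.mul_sum]
      refine Finset.sum_congr rfl fun j _ => ?_
      rw [Nat.add_sub_add_right]
      ring
    rw [Finset.sum_range_succ', hshift, ih, Nat.sub_zero, esymm_cons_succ]
    ring

theorem esymm_mul_esymm_le_sq (s : Multiset ℝ) (k : ℕ) :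
    s.esymm k * s.esymm (k + 2) ≤ s.esymm (k + 1) ^ 2 := by
  rcases lt_or_ge (card s) (k + 2) with hlt | hle
  · rw [esymm_eq_zero_of_card_lt hlt, mul_zero]
    positivity
  have hsplits : (s.map fun r => X + C r).prod.Splits :=
    Splits.multisetProd fun f hf => by
      obtain ⟨r, -, rfl⟩ := mem_map.1 hf
      exact Splits.X_add_C r
  obtain ⟨d, hd⟩ : ∃ d, card s = d + (k + 2) := ⟨card s - (k + 2), by omega⟩
  have := hsplits.coeff_mul_coeff_le_sq d
  rwa [prod_X_add_C_coeff _ (by omega), prod_X_add_C_coeff _ (by omega),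
    prod_X_add_C_coeff _ (by omega), hd, show d + (k + 2) - d = k + 2 by omega,
    show d + (k + 2) - (d + 1) = k + 1 by omega, show d + (k + 2) - (d + 2) = k by omega,
    mul_comm] at this

theorem esymm_pos_of_cons {a : ℝ} {s : Multiset ℝ} :
    ∀ {k : ℕ}, (∀ j ≤ k + 1, 0 < (a ::ₘ s).esymm j) → 0 < s.esymm k
  | 0, _ => by simp [esymm_zero]
  | k + 1, h => by
    have hk : 0 < s.esymm k := esymm_pos_of_cons fun j hj => h j (by omega)
    have h₁ := h (k + 1) (by omega)
    have h₂ := h (k + 2) (by omega)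
    rw [esymm_cons_succ] at h₁ h₂
    have hnewton := s.esymm_mul_esymm_le_sq k
    -- if `s.esymm (k + 1) ≤ 0`, then `h₁` forces `a > 0`, and `h₂` then gives
    -- `s.esymm k * s.esymm (k + 2) > s.esymm (k + 1) ^ 2`
    by_contra! hle
    nlinarith [mul_pos hk h₂]

end Multiset

theorem Matrix.sum_smul_diagonal_pow {ι 𝕜 : Type*} [Fintype ι] [DecidableEq ι] [RCLike 𝕜]
    (s : Finset ℕ) (c : ℕ → ℝ) (d : ι → ℝ) :
    ∑ j ∈ s, c j • diagonal (RCLike.ofReal ∘ d : ι → 𝕜) ^ j =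
      diagonal fun i => (RCLike.ofReal (∑ j ∈ s, c j * d i ^ j) : 𝕜) := by
  ext i i'
  rcases eq_or_ne i i' with rfl | h
  · simp [diagonal_pow, Matrix.sum_apply, RCLike.real_smul_eq_coe_mul]
  · simp [diagonal_pow, Matrix.sum_apply, h]

theorem Matrix.IsHermitian.posDef_sum_smul_pow {ι 𝕜 : Type*} [Fintype ι] [DecidableEq ι]
    [RCLike 𝕜] {A : Matrix ι ι 𝕜} (hA : A.IsHermitian) (s : Finset ℕ) (c : ℕ → ℝ)
    (hc : ∀ i, 0 < ∑ j ∈ s, c j * hA.eigenvalues i ^ j) :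
    (∑ j ∈ s, c j • A ^ j).PosDef := by
  have hspec : A = Unitary.conjStarAlgAut ℝ _ hA.eigenvectorUnitary
      (diagonal (RCLike.ofReal ∘ hA.eigenvalues)) := hA.spectral_theorem
  have hdiag : ∑ j ∈ s, c j • A ^ j = Unitary.conjStarAlgAut ℝ _ hA.eigenvectorUnitary
      (diagonal fun i => (RCLike.ofReal (∑ j ∈ s, c j * hA.eigenvalues i ^ j) : 𝕜)) := by
    conv_lhs => rw [hspec]
    rw [← sum_smul_diagonal_pow, map_sum]
    simp only [map_smul, map_pow]
  rw [hdiag, Unitary.conjStarAlgAut_apply, Unitary.isUnit_coe.posDef_star_right_conjugate_iff,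
    posDef_diagonal_iff]
  exact fun i => RCLike.ofReal_pos.2 (hc i)

theorem esymm_eq_multiset_esymm (n k : ℕ) (x : Fin n → ℝ) :
    esymm n k x = (univ.val.map x).esymm k :=
  (Finset.esymm_map_val x univ k).symm

theorem sigmaMat_eq_esymm_eigenvalues {n k : ℕ} {A : Matrix (Fin n) (Fin n) ℝ}
    (hA : A.IsHermitian) (hk : k ≤ n) :
    sigmaMat n k A = (univ.val.map hA.eigenvalues).esymm k := by
  have hcharpoly : A.charpoly = ((univ.val.map hA.eigenvalues).map fun r => X - C r).prod := by
    rw [hA.charpoly_eq, Multiset.map_map]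
    rfl
  have hcard : Multiset.card (univ.val.map hA.eigenvalues) = n := by simp
  rw [sigmaMat, hcharpoly, Multiset.prod_X_sub_C_coeff _ (by omega), hcard,
    Nat.sub_sub_self hk, ← mul_assoc, ← pow_add, Even.neg_one_pow ⟨k, rfl⟩, one_mul]

attribute [local instance] Matrix.normedAddCommGroup Matrix.normedSpace

theorem stmt_2 (n k : ℕ) (hk : 1 ≤ k) (hkn : k ≤ n)
    (A : Matrix (Fin n) (Fin n) ℝ) (hA : A.IsHermitian)
    (heig : ∀ j : ℕ, 1 ≤ j → j ≤ k → 0 < esymm n j hA.eigenvalues) :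
    (newtonT n (k - 1) A).PosDef := by
  set M := univ.val.map hA.eigenvalues
  have hM : ∀ j ≤ k - 1 + 1, 0 < M.esymm j := by
    rintro (_ | j) hj
    · simp [Multiset.esymm_zero]
    · rw [← esymm_eq_multiset_esymm]
      exact heig (j + 1) (by omega) (by omega)
  refine hA.posDef_sum_smul_pow _ _ fun i => ?_
  have hcons : M = hA.eigenvalues i ::ₘ M.erase (hA.eigenvalues i) :=
    (Multiset.cons_erase (Multiset.mem_map_of_mem _ (mem_univ i))).symm
  calc 0 < (M.erase (hA.eigenvalues i)).esymm (k - 1) :=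
        Multiset.esymm_pos_of_cons (hcons ▸ hM)
    _ = ∑ j ∈ range (k - 1 + 1), (-1) ^ j * M.esymm (k - 1 - j) * hA.eigenvalues i ^ j := by
        rw [hcons, Multiset.sum_range_neg_one_pow_mul_esymm_cons_mul_pow, ← hcons]
    _ = _ := sum_congr rfl fun j _ => by
        rw [sigmaMat_eq_esymm_eigenvalues hA (by omega)]
end

section
/- The function λ ↦ log σ_k(λ) is concave on the cone Γ_k^+. -/
open Finset

/-- σ_{k}(λ with i-th coordinate deleted) -/
noncomputable def esymmDel (n k : ℕ) (x : Fin n → ℝ) (i : Fin n) : ℝ :=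
  ∑ s ∈ ((Finset.univ : Finset (Fin n)).erase i).powersetCard k, ∏ j ∈ s, x j

def GammaPlus (n k : ℕ) : Set (Fin n → ℝ) :=
  {x | ∀ j : ℕ, 1 ≤ j → j ≤ k → 0 < esymm n j x}

/-!
Write `q_j = σ_{j+1} / σ_j` and `λ | i` for `λ` with its `i`-th coordinate deleted. Deleting a
coordinate maps `Γ_{k+1}` into `Γ_k`: otherwise, shifting `λ` along `(1, …, 1)` until `σ_k(λ | i)`
vanishes gives a point of `Γ_{k+1}` that violates Newton's inequality `σ_{k-1} σ_{k+1} ≤ σ_k²`,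
which holds because `∏ (X + λ_i)` is real-rooted. Euler's identity
`Σ_i λ_i σ_k(λ | i) = (k + 1) σ_{k+1}(λ)` writes `(k + 2) q_{k+1}(λ)` as `Σ_i λ_i ∥ q_k(λ | i)`,
where `a ∥ b = ab / (a + b)` is the parallel sum; since `∥` is superadditive and monotone,
induction on `k` shows that `Γ_{k+1}` is closed under addition and that `q_k` is superadditive on
it (Marcus–Lopes). Being homogeneous of degree one, `q_k` is then concave on the convex cone
`Γ_{k+1}`, and `log σ_k = Σ_{j<k} log q_j` is a sum of concave functions.
-/

open Polynomial

namespace Polynomial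

theorem Splits.derivative {p : ℝ[X]} (hp : p.Splits) : (derivative p).Splits := by
  refine splits_iff_card_roots.2 (le_antisymm (card_roots' _) ?_)
  have hRolle := p.card_roots_le_derivative
  have hdeg := natDegree_derivative_le p
  rw [splits_iff_card_roots.1 hp] at hRolle
  omega

theorem Splits.iterate_derivative {p : ℝ[X]} (hp : p.Splits) (m : ℕ) :
    (Polynomial.derivative^[m] p).Splits := by
  induction m with
  | zero => exact hp
  | succ m ih => rw [Function.iterate_succ_apply']; exact ih.derivative

theorem Splits.reverse {K : Type*} [Field K] {p : K[X]} (hp : p.Splits) : p.reverse.Splits := by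
  refine Submonoid.closure_induction (motive := fun q _ => q.reverse.Splits) ?_ ?_ ?_ hp
  · rintro q (⟨a, rfl⟩ | ⟨a, rfl⟩) <;>
      refine Splits.of_natDegree_le_one ((reverse_natDegree_le _).trans ?_)
    · simp
    · exact (natDegree_X_add_C a).le
  · exact Splits.of_natDegree_le_one ((reverse_natDegree_le _).trans (by simp))
  · intro q r _ _ hq hr
    rw [reverse_mul_of_domain]
    exact hq.mul hr

theorem Splits.coeff_zero_mul_coeff_two_nonpos_of_natDegree_le {q : ℝ[X]} (hq : q.Splits)
    (hdeg : q.natDegree ≤ 2) (h1 : q.coeff 1 = 0) : q.coeff 0 * q.coeff 2 ≤ 0 := by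
  rcases eq_or_ne (q.coeff 2) 0 with h2 | h2
  · rw [h2, mul_zero]
  have hdeg2 : q.natDegree = 2 := le_antisymm hdeg (le_natDegree_of_ne_zero h2)
  obtain ⟨r, hr⟩ := hq.exists_eval_eq_zero (natDegree_pos_iff_degree_pos.1 (by omega)).ne'
  rw [eval_eq_sum_range, hdeg2] at hr
  simp only [sum_range_succ, sum_range_zero, h1] at hr
  have hprod : q.coeff 0 * q.coeff 2 = -(q.coeff 2 * r) ^ 2 := by
    linear_combination q.coeff 2 * hr
  rw [hprod]
  exact neg_nonpos.2 (sq_nonneg _)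

theorem Splits.coeff_zero_mul_coeff_two_nonpos {p : ℝ[X]} (hp : p.Splits) (h1 : p.coeff 1 = 0) :
    p.coeff 0 * p.coeff 2 ≤ 0 := by
  set N := p.natDegree
  rcases lt_or_ge N 2 with hN | hN
  · rw [coeff_eq_zero_of_natDegree_lt hN, mul_zero]
  -- differentiating the reversal `N - 2` times leaves `p.coeff 2 + p.coeff 1 X + p.coeff 0 X²`,
  -- up to positive factors
  set q := Polynomial.derivative^[N - 2] p.reverse
  have hq : ∀ d ≤ 2, q.coeff d = ((d + (N - 2)).descFactorial (N - 2) : ℝ) * p.coeff (2 - d) := by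
    intro d hd
    rw [coeff_iterate_derivative, nsmul_eq_mul, coeff_reverse, revAt_le (by omega)]
    congr 2
    omega
  have hqdeg : q.natDegree ≤ 2 :=
    (natDegree_iterate_derivative _ _).trans (by have := reverse_natDegree_le p; omega)
  have hc : ∀ d, (0 : ℝ) < (d + (N - 2)).descFactorial (N - 2) := fun d =>
    mod_cast Nat.descFactorial_pos.2 (by omega)
  have hquad := Splits.coeff_zero_mul_coeff_two_nonpos_of_natDegree_le
    (hp.reverse.iterate_derivative (N - 2)) hqdeg (by rw [hq 1 (by norm_num)]; simp [h1])
  rw [hq 0 (by norm_num), hq 2 le_rfl] at hquad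
  have hc02 := mul_pos (hc 0) (hc 2)
  nlinarith

theorem Splits.coeff_mul_coeff_add_two_nonpos {p : ℝ[X]} (hp : p.Splits) {e : ℕ}
    (h : p.coeff (e + 1) = 0) : p.coeff e * p.coeff (e + 2) ≤ 0 := by
  induction e generalizing p with
  | zero => exact hp.coeff_zero_mul_coeff_two_nonpos h
  | succ e ih =>
    have hcoeff := ih hp.derivative (by rw [coeff_derivative, h, zero_mul])
    rw [coeff_derivative, coeff_derivative, show e + 2 + 1 = e + 1 + 2 from rfl] at hcoeff
    have hpos : (0 : ℝ) < (e + 1) * ((e + 2 : ℕ) + 1) := by positivity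
    nlinarith

end Polynomial

section ParallelSum

variable {𝕜 : Type*} [Field 𝕜]

def parallelSum (a b : 𝕜) : 𝕜 :=
  a * b / (a + b)

theorem parallelSum_div_eq {a u v : 𝕜} (hv : v ≠ 0) :
    parallelSum a (u / v) = a * u / (a * v + u) := by
  rw [parallelSum, show a + u / v = (a * v + u) / v by field_simp, mul_div_assoc,
    div_div_div_cancel_right₀ hv, mul_div_assoc]

variable [LinearOrder 𝕜] [IsStrictOrderedRing 𝕜]

theorem parallelSum_le_parallelSum_right {a b b' : 𝕜} (hab : 0 < a + b) (hbb' : b ≤ b') :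
    parallelSum a b ≤ parallelSum a b' := by
  rw [parallelSum, parallelSum, div_le_div_iff₀ hab (by linarith)]
  nlinarith [mul_nonneg (sq_nonneg a) (sub_nonneg.2 hbb')]

theorem parallelSum_add_parallelSum_le {a₁ a₂ b₁ b₂ : 𝕜} (h₁ : 0 < a₁ + b₁) (h₂ : 0 < a₂ + b₂) :
    parallelSum a₁ b₁ + parallelSum a₂ b₂ ≤ parallelSum (a₁ + a₂) (b₁ + b₂) := by
  rw [parallelSum, parallelSum, parallelSum, div_add_div _ _ h₁.ne' h₂.ne',
    div_le_div_iff₀ (mul_pos h₁ h₂) (by linarith)]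
  nlinarith [sq_nonneg (a₁ * b₂ - a₂ * b₁), mul_pos h₁ h₂]

end ParallelSum

theorem ConcaveOn.log {E : Type*} [AddCommMonoid E] [Module ℝ E] {s : Set E} {f : E → ℝ}
    (hf : ConcaveOn ℝ s f) (hpos : ∀ x ∈ s, 0 < f x) : ConcaveOn ℝ s fun x => Real.log (f x) :=
  ⟨hf.1, fun x hx y hy _ _ ha hb hab =>
    (strictConcaveOn_log_Ioi.concaveOn.2 (hpos x hx) (hpos y hy) ha hb hab).trans
      (Real.log_le_log ((convex_Ioi (0 : ℝ)) (hpos x hx) (hpos y hy) ha hb hab)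
        (hf.2 hx hy ha hb hab))⟩

section Esymm

variable {ι : Type*}

noncomputable def esymmOn (A : Finset ι) (k : ℕ) (x : ι → ℝ) : ℝ :=
  ∑ s ∈ A.powersetCard k, ∏ i ∈ s, x i

def gammaCone (A : Finset ι) (k : ℕ) : Set (ι → ℝ) :=
  {x | ∀ j ≤ k, 0 < esymmOn A j x}

noncomputable def esymmRatio (A : Finset ι) (k : ℕ) (x : ι → ℝ) : ℝ :=
  esymmOn A (k + 1) x / esymmOn A k x

variable {A : Finset ι} {j k : ℕ} {x y : ι → ℝ}

@[simp]
theorem esymmOn_zero (A : Finset ι) (x : ι → ℝ) : esymmOn A 0 x = 1 := by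
  simp [esymmOn]

theorem esymmOn_of_card_lt (h : #A < k) (x : ι → ℝ) : esymmOn A k x = 0 := by
  simp [esymmOn, powersetCard_eq_empty.2 h]

theorem esymmOn_one (A : Finset ι) (x : ι → ℝ) : esymmOn A 1 x = ∑ i ∈ A, x i := by
  simp [esymmOn, powersetCard_one, sum_map]

theorem esymmOn_smul (A : Finset ι) (k : ℕ) (c : ℝ) (x : ι → ℝ) :
    esymmOn A k (c • x) = c ^ k * esymmOn A k x := by
  rw [esymmOn, esymmOn, mul_sum]
  refine sum_congr rfl fun s hs => ?_
  simp only [Pi.smul_apply, smul_eq_mul, prod_mul_distrib, prod_const,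
    (mem_powersetCard.1 hs).2]

theorem coeff_prod_X_add_C_card_sub (A : Finset ι) (x : ι → ℝ) (hj : j ≤ #A) :
    (∏ i ∈ A, (X + C (x i))).coeff (#A - j) = esymmOn A j x := by
  rw [prod_X_add_C_coeff _ _ (Nat.sub_le _ _), Nat.sub_sub_self hj]; rfl

theorem esymmOn_mul_esymmOn_add_two_nonpos (h : esymmOn A (j + 1) x = 0) :
    esymmOn A j x * esymmOn A (j + 2) x ≤ 0 := by
  rcases lt_or_ge #A (j + 2) with hA | hA
  · rw [esymmOn_of_card_lt hA, mul_zero]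
  have hsplits : (∏ i ∈ A, (X + C (x i))).Splits := Splits.prod fun i _ => Splits.X_add_C (x i)
  have hcoeff := hsplits.coeff_mul_coeff_add_two_nonpos (e := #A - (j + 2))
    (by rw [show #A - (j + 2) + 1 = #A - (j + 1) by omega,
      coeff_prod_X_add_C_card_sub A x (by omega), h])
  rwa [show #A - (j + 2) + 2 = #A - j by omega, coeff_prod_X_add_C_card_sub A x hA,
    coeff_prod_X_add_C_card_sub A x (by omega), mul_comm] at hcoeff

theorem mem_gammaCone_succ :
    x ∈ gammaCone A (k + 1) ↔ x ∈ gammaCone A k ∧ 0 < esymmOn A (k + 1) x :=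
  ⟨fun hx => ⟨fun j hj => hx j (by omega), hx _ le_rfl⟩, fun ⟨hx, hk⟩ j hj =>
    (Nat.le_succ_iff.1 hj).elim (hx j) fun h => h ▸ hk⟩

@[simp]
theorem gammaCone_zero (A : Finset ι) : gammaCone A 0 = Set.univ := by
  ext x; simp [gammaCone]

theorem gammaCone_anti (A : Finset ι) : Antitone (gammaCone A) :=
  fun _ _ hjk _ hx j hj => hx j (hj.trans hjk)

theorem card_le_of_mem_gammaCone (hx : x ∈ gammaCone A k) : k ≤ #A := by
  by_contra! h
  exact (hx k le_rfl).ne' (esymmOn_of_card_lt h x)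

theorem smul_mem_gammaCone {c : ℝ} (hc : 0 < c) (hx : x ∈ gammaCone A k) :
    c • x ∈ gammaCone A k := fun j hj => by
  rw [esymmOn_smul]; exact mul_pos (pow_pos hc j) (hx j hj)

theorem esymmRatio_pos (hx : x ∈ gammaCone A (k + 1)) : 0 < esymmRatio A k x :=
  div_pos (hx _ le_rfl) (hx k (by omega))

theorem mem_gammaCone_succ_of_esymmRatio_pos (hx : x ∈ gammaCone A k)
    (hq : 0 < esymmRatio A k x) : x ∈ gammaCone A (k + 1) := by
  refine mem_gammaCone_succ.2 ⟨hx, ?_⟩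
  have := mul_pos hq (hx k le_rfl)
  rwa [esymmRatio, div_mul_cancel₀ _ (hx k le_rfl).ne'] at this

theorem esymmRatio_smul (A : Finset ι) (k : ℕ) (c : ℝ) (x : ι → ℝ) :
    esymmRatio A k (c • x) = c * esymmRatio A k x := by
  rw [esymmRatio, esymmRatio, esymmOn_smul, esymmOn_smul]
  rcases eq_or_ne c 0 with rfl | hc
  · cases k <;> simp
  rw [pow_succ, mul_comm _ c, mul_assoc, mul_div_assoc, mul_div_mul_left _ _ (pow_ne_zero k hc)]

noncomputable def esymmShiftPoly (A : Finset ι) (j : ℕ) (x : ι → ℝ) : ℝ[X] :=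
  hasseDeriv (#A - j) (∏ i ∈ A, (X + C (x i)))

theorem eval_esymmShiftPoly (hj : j ≤ #A) (x : ι → ℝ) (s : ℝ) :
    (esymmShiftPoly A j x).eval s = esymmOn A j (fun i => x i + s) := by
  have htaylor : taylor s (∏ i ∈ A, (X + C (x i))) = ∏ i ∈ A, (X + C (x i + s)) := by
    rw [taylor_apply, Polynomial.prod_comp]
    refine prod_congr rfl fun i _ => ?_
    rw [add_comp, X_comp, C_comp, C_add]; ring
  rw [esymmShiftPoly, ← taylor_coeff, htaylor, coeff_prod_X_add_C_card_sub A _ hj]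

theorem coeff_esymmShiftPoly {d : ℕ} (hdj : d ≤ j) (hj : j ≤ #A) (x : ι → ℝ) :
    (esymmShiftPoly A j x).coeff d
      = ((d + (#A - j)).choose (#A - j) : ℝ) * esymmOn A (j - d) x := by
  rw [esymmShiftPoly, hasseDeriv_coeff, show d + (#A - j) = #A - (j - d) by omega,
    coeff_prod_X_add_C_card_sub A x (by omega)]

theorem natDegree_esymmShiftPoly (hj : j ≤ #A) (x : ι → ℝ) :
    (esymmShiftPoly A j x).natDegree = j := by
  rw [esymmShiftPoly, natDegree_hasseDeriv, natDegree_prod_of_monic _ _ fun i _ => monic_X_add_C _]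
  simp only [natDegree_X_add_C, sum_const, smul_eq_mul, mul_one]
  omega

theorem add_const_mem_gammaCone (hx : x ∈ gammaCone A k) {s : ℝ} (hs : 0 ≤ s) :
    (fun i => x i + s) ∈ gammaCone A k := by
  intro j hj
  have hjA : j ≤ #A := hj.trans (card_le_of_mem_gammaCone hx)
  rw [← eval_esymmShiftPoly hjA, eval_eq_sum_range' (n := j + 1)
    (by rw [natDegree_esymmShiftPoly hjA]; omega)]
  refine sum_pos' (fun d hd => ?_) ⟨0, by simp, ?_⟩
  · rw [coeff_esymmShiftPoly (by simpa [Nat.lt_succ_iff] using hd) hjA]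
    have := hx (j - d) (by omega)
    positivity
  · rw [coeff_esymmShiftPoly (Nat.zero_le _) hjA]
    simpa using hx j hj

theorem exists_esymmOn_add_const_eq_zero (hj : 1 ≤ j) (hjA : j ≤ #A) (hx : esymmOn A j x ≤ 0) :
    ∃ s, 0 ≤ s ∧ esymmOn A j (fun i => x i + s) = 0 := by
  have hlead : (esymmShiftPoly A j x).leadingCoeff = (#A).choose (#A - j) := by
    rw [leadingCoeff, natDegree_esymmShiftPoly hjA, coeff_esymmShiftPoly le_rfl hjA,
      Nat.sub_self, esymmOn_zero, mul_one, Nat.add_sub_cancel' hjA]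
  have htendsto := (esymmShiftPoly A j x).tendsto_atTop_of_leadingCoeff_nonneg
    (natDegree_pos_iff_degree_pos.1 (by rw [natDegree_esymmShiftPoly hjA]; omega))
    (by rw [hlead]; positivity)
  obtain ⟨s, hs, hzero⟩ := intermediate_value_Ici (a := 0)
    (esymmShiftPoly A j x).continuous.continuousOn htendsto
    (show (0 : ℝ) ∈ Set.Ici _ by rw [eval_esymmShiftPoly hjA]; simpa using hx)
  exact ⟨s, hs, by rwa [← eval_esymmShiftPoly hjA]⟩

variable [DecidableEq ι]

theorem esymmOn_succ_of_mem {i : ι} (hi : i ∈ A) (k : ℕ) (x : ι → ℝ) :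
    esymmOn A (k + 1) x = x i * esymmOn (A.erase i) k x + esymmOn (A.erase i) (k + 1) x := by
  have hi' : i ∉ A.erase i := notMem_erase i A
  have hnot : ∀ s ∈ (A.erase i).powersetCard k, i ∉ s := fun s hs h =>
    hi' ((mem_powersetCard.1 hs).1 h)
  rw [esymmOn, ← insert_erase hi, powersetCard_succ_insert hi', sum_union, sum_image, add_comm,
    esymmOn, esymmOn, mul_sum, insert_erase hi]
  · congr 1
    exact sum_congr rfl fun s hs => prod_insert (hnot s hs)
  · intro s hs t ht hst
    rw [← erase_insert (hnot s hs), hst, erase_insert (hnot t ht)]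
  · refine disjoint_left.2 fun s hs hs' => ?_
    obtain ⟨t, -, rfl⟩ := mem_image.1 hs'
    exact hi' ((mem_powersetCard.1 hs).1 (mem_insert_self i t))

theorem sum_esymmOn_erase (A : Finset ι) (j : ℕ) (x : ι → ℝ) :
    ∑ i ∈ A, esymmOn (A.erase i) j x = (#A - j : ℕ) * esymmOn A j x := by
  simp only [esymmOn]
  rw [sum_comm' (t' := A.powersetCard j) (s' := fun s => A \ s), mul_sum]
  · refine sum_congr rfl fun s hs => ?_
    rw [sum_const, nsmul_eq_mul, card_sdiff_of_subset (mem_powersetCard.1 hs).1,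
      (mem_powersetCard.1 hs).2]
  · intro i s
    simp only [mem_powersetCard, mem_sdiff, subset_erase]
    tauto

theorem sum_mul_esymmOn_erase (A : Finset ι) (k : ℕ) (x : ι → ℝ) :
    ∑ i ∈ A, x i * esymmOn (A.erase i) k x = (k + 1) * esymmOn A (k + 1) x := by
  have hterm : ∀ i ∈ A, x i * esymmOn (A.erase i) k x
      = esymmOn A (k + 1) x - esymmOn (A.erase i) (k + 1) x := fun i hi => by
    rw [esymmOn_succ_of_mem hi]; ring
  rw [sum_congr rfl hterm, sum_sub_distrib, sum_const, nsmul_eq_mul, sum_esymmOn_erase]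
  rcases le_or_gt (k + 1) #A with hk | hk
  · rw [Nat.cast_sub hk]; push_cast; ring
  · rw [esymmOn_of_card_lt hk]; ring

theorem erase_mem_gammaCone {i : ι} (hi : i ∈ A) :
    ∀ {k : ℕ} {x : ι → ℝ}, x ∈ gammaCone A (k + 1) → x ∈ gammaCone (A.erase i) k
  | 0, _, _ => by simp
  | k + 1, x, hx => by
    refine mem_gammaCone_succ.2 ⟨erase_mem_gammaCone hi (gammaCone_anti A (by omega) hx), ?_⟩
    by_contra! hle
    have hcard : k + 2 ≤ #A := card_le_of_mem_gammaCone hx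
    obtain ⟨s, hs, hzero⟩ := exists_esymmOn_add_const_eq_zero (by omega)
      (by rw [card_erase_of_mem hi]; omega) hle
    have hshift := add_const_mem_gammaCone hx hs
    have hlow := erase_mem_gammaCone hi (gammaCone_anti A (by omega) hshift) k le_rfl
    have hhigh : 0 < esymmOn (A.erase i) (k + 2) fun j => x j + s := by
      have := esymmOn_succ_of_mem hi (k + 1) fun j => x j + s
      rw [hzero, mul_zero, zero_add] at this
      exact this ▸ hshift (k + 2) le_rfl
    exact (mul_pos hlow hhigh).not_ge (esymmOn_mul_esymmOn_add_two_nonpos hzero)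

theorem add_esymmRatio_erase_pos {i : ι} (hi : i ∈ A) (hA : 0 < esymmOn A (k + 1) x)
    (hB : 0 < esymmOn (A.erase i) k x) : 0 < x i + esymmRatio (A.erase i) k x := by
  have : x i + esymmRatio (A.erase i) k x = esymmOn A (k + 1) x / esymmOn (A.erase i) k x := by
    rw [esymmRatio, esymmOn_succ_of_mem hi]; field_simp
  rw [this]; positivity

theorem mul_esymmRatio_succ_eq_sum_parallelSum (hx : ∀ i ∈ A, esymmOn (A.erase i) k x ≠ 0) :
    (k + 2) * esymmRatio A (k + 1) x
      = ∑ i ∈ A, parallelSum (x i) (esymmRatio (A.erase i) k x) := by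
  rw [esymmRatio, ← mul_div_assoc, show (k : ℝ) + 2 = (k + 1 : ℕ) + 1 by push_cast; ring,
    ← sum_mul_esymmOn_erase, sum_div]
  refine sum_congr rfl fun i hi => ?_
  rw [esymmRatio, parallelSum_div_eq (hx i hi), esymmOn_succ_of_mem hi k]

theorem esymmRatio_succ_add_le (hx : x ∈ gammaCone A (k + 2)) (hy : y ∈ gammaCone A (k + 2))
    (herase : ∀ i ∈ A, x + y ∈ gammaCone (A.erase i) (k + 1) ∧
      esymmRatio (A.erase i) k x + esymmRatio (A.erase i) k y ≤ esymmRatio (A.erase i) k (x + y)) :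
    esymmRatio A (k + 1) x + esymmRatio A (k + 1) y ≤ esymmRatio A (k + 1) (x + y) := by
  have hsum : ∀ w, (∀ i ∈ A, w ∈ gammaCone (A.erase i) (k + 1)) →
      (k + 2) * esymmRatio A (k + 1) w
        = ∑ i ∈ A, parallelSum (w i) (esymmRatio (A.erase i) k w) := fun w hw =>
    mul_esymmRatio_succ_eq_sum_parallelSum fun i hi => (hw i hi k (by omega)).ne'
  have hpos : ∀ w ∈ gammaCone A (k + 1), ∀ i ∈ A, w ∈ gammaCone (A.erase i) (k + 1) →
      0 < w i + esymmRatio (A.erase i) k w := fun w hw i hi hwi =>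
    add_esymmRatio_erase_pos hi (hw _ le_rfl) (hwi k (by omega))
  have hxB : ∀ i ∈ A, x ∈ gammaCone (A.erase i) (k + 1) := fun i hi => erase_mem_gammaCone hi hx
  have hyB : ∀ i ∈ A, y ∈ gammaCone (A.erase i) (k + 1) := fun i hi => erase_mem_gammaCone hi hy
  have hx' : x ∈ gammaCone A (k + 1) := gammaCone_anti A (by omega) hx
  have hy' : y ∈ gammaCone A (k + 1) := gammaCone_anti A (by omega) hy
  refine le_of_mul_le_mul_left ?_ (by positivity : (0 : ℝ) < k + 2)
  rw [mul_add, hsum x hxB, hsum y hyB, hsum (x + y) fun i hi => (herase i hi).1, ← sum_add_distrib]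
  refine sum_le_sum fun i hi => ?_
  have hxi := hpos x hx' i hi (hxB i hi)
  have hyi := hpos y hy' i hi (hyB i hi)
  calc _ ≤ parallelSum (x i + y i) (esymmRatio (A.erase i) k x + esymmRatio (A.erase i) k y) :=
        parallelSum_add_parallelSum_le hxi hyi
    _ ≤ _ := parallelSum_le_parallelSum_right (by linarith) (herase i hi).2

theorem add_mem_gammaCone_and_esymmRatio_add_le :
    ∀ (k : ℕ) {A : Finset ι} {x y : ι → ℝ}, x ∈ gammaCone A (k + 1) → y ∈ gammaCone A (k + 1) →
      x + y ∈ gammaCone A (k + 1) ∧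
        esymmRatio A k x + esymmRatio A k y ≤ esymmRatio A k (x + y)
  | 0, A, x, y, hx, hy => by
    have hadd : esymmOn A 1 (x + y) = esymmOn A 1 x + esymmOn A 1 y := by
      simp [esymmOn_one, sum_add_distrib]
    refine ⟨mem_gammaCone_succ.2 ⟨by simp, ?_⟩, by simp [esymmRatio, hadd]⟩
    rw [hadd]
    exact add_pos (hx 1 le_rfl) (hy 1 le_rfl)
  | k + 1, A, x, y, hx, hy => by
    have hxy := (add_mem_gammaCone_and_esymmRatio_add_le k (gammaCone_anti A (by omega) hx)
      (gammaCone_anti A (by omega) hy)).1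
    have hq := esymmRatio_succ_add_le hx hy fun i hi =>
      add_mem_gammaCone_and_esymmRatio_add_le k (erase_mem_gammaCone hi hx)
        (erase_mem_gammaCone hi hy)
    exact ⟨mem_gammaCone_succ_of_esymmRatio_pos hxy
      ((add_pos (esymmRatio_pos hx) (esymmRatio_pos hy)).trans_le hq), hq⟩

theorem add_mem_gammaCone (hx : x ∈ gammaCone A k) (hy : y ∈ gammaCone A k) :
    x + y ∈ gammaCone A k := by
  cases k with
  | zero => simp
  | succ k => exact (add_mem_gammaCone_and_esymmRatio_add_le k hx hy).1

theorem convex_gammaCone (A : Finset ι) (k : ℕ) : Convex ℝ (gammaCone A k) :=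
  convex_iff_forall_pos.2 fun _ hx _ hy _ _ ha hb _ =>
    add_mem_gammaCone (smul_mem_gammaCone ha hx) (smul_mem_gammaCone hb hy)

theorem concaveOn_esymmRatio (A : Finset ι) (k : ℕ) :
    ConcaveOn ℝ (gammaCone A (k + 1)) (esymmRatio A k) := by
  refine concaveOn_iff_forall_pos.2 ⟨convex_gammaCone A _, fun x hx y hy a b ha hb _ => ?_⟩
  rw [smul_eq_mul, smul_eq_mul, ← esymmRatio_smul, ← esymmRatio_smul]
  exact (add_mem_gammaCone_and_esymmRatio_add_le k (smul_mem_gammaCone ha hx)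
    (smul_mem_gammaCone hb hy)).2

theorem concaveOn_log_esymmOn (A : Finset ι) :
    ∀ k : ℕ, ConcaveOn ℝ (gammaCone A k) fun x => Real.log (esymmOn A k x)
  | 0 => by simpa using concaveOn_const (0 : ℝ) convex_univ
  | k + 1 => by
    refine (((concaveOn_log_esymmOn A k).subset (gammaCone_anti A k.le_succ)
      (convex_gammaCone A _)).add ((concaveOn_esymmRatio A k).log fun x hx =>
        esymmRatio_pos hx)).congr fun x hx => ?_
    rw [Pi.add_apply, esymmRatio, Real.log_div (hx _ le_rfl).ne' (hx k (by omega)).ne']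
    ring

end Esymm

theorem gammaPlus_eq_gammaCone (n k : ℕ) : GammaPlus n k = gammaCone (univ : Finset (Fin n)) k := by
  ext x
  refine ⟨fun hx j hj => ?_, fun hx j _ hj => hx j hj⟩
  rcases j with _ | j
  · simp
  · exact hx _ (by omega) hj

theorem stmt_3_general (n k : ℕ) :
    ConcaveOn ℝ (GammaPlus n k) (fun x => Real.log (esymm n k x)) := by
  rw [gammaPlus_eq_gammaCone]
  exact concaveOn_log_esymmOn univ k

theorem stmt_3 (n k : ℕ) (hk : 1 ≤ k) (hkn : k ≤ n) :
    ConcaveOn ℝ (GammaPlus n k) (fun x => Real.log (esymm n k x)) :=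
  stmt_3_general n k
end

section
/- Let A be a real symmetric n×n matrix with eigenvalues in Γ_k^+, and suppose k ≥ 2. Then every entry of A is bounded in terms of the trace: |A_{ij}| ≤ c·tr(A) for a constant c depending only on n and k (in particular tr(A) > 0). -/
open Finset

attribute [local instance] Matrix.normedAddCommGroup Matrix.normedSpace

/-! Since the Frobenius norm is orthogonally invariant, `∑ i j, A i j ^ 2 = ∑ λᵢ² = σ₁(λ)² - 2 σ₂(λ)`.
So `σ₂(λ) > 0` gives `A i j ^ 2 < σ₁(λ)² = (tr A)²`, and `σ₁(λ) > 0` gives `|A i j| ≤ tr A`: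
the constant `c = 1` works. -/

open scoped Matrix

theorem sq_sum_eq_sum_sq_add_two_mul_sum_powersetCard_two {ι R : Type*} [Fintype ι] [CommRing R]
    (x : ι → R) :
    (∑ i, x i) ^ 2 = ∑ i, x i ^ 2 + 2 * ∑ t ∈ univ.powersetCard 2, ∏ i ∈ t, x i := by
  have newton := MvPolynomial.mul_esymm_eq_sum ι R 2
  rw [show {a ∈ antidiagonal 2 | a.1 < 2} = {(0, 2), (1, 1)} from rfl,
    sum_pair (by decide)] at newton
  have h := congrArg (MvPolynomial.aeval x) newton
  simp [MvPolynomial.esymm, MvPolynomial.psum, powersetCard_one] at h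
  linear_combination -h

theorem Matrix.sq_le_sum_sq_entries {m n R : Type*} [Fintype m] [Fintype n] [CommRing R]
    [LinearOrder R] [IsStrictOrderedRing R] (A : Matrix m n R) (i : m) (j : n) :
    A i j ^ 2 ≤ ∑ i, ∑ j, A i j ^ 2 :=
  calc A i j ^ 2 ≤ ∑ j, A i j ^ 2 := single_le_sum (fun _ _ ↦ sq_nonneg _) (mem_univ j)
    _ ≤ ∑ i, ∑ j, A i j ^ 2 :=
      single_le_sum (fun _ _ ↦ sum_nonneg fun _ _ ↦ sq_nonneg _) (mem_univ i)

theorem Matrix.sum_sq_entries_eq_trace_mul_transpose {m n R : Type*} [Fintype m] [Fintype n]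
    [CommSemiring R] (A : Matrix m n R) : ∑ i, ∑ j, A i j ^ 2 = (A * Aᵀ).trace := by
  simp [Matrix.trace, Matrix.mul_apply, sq]

theorem Matrix.IsHermitian.trace_mul_self {𝕜 n : Type*} [RCLike 𝕜] [Fintype n] [DecidableEq n]
    {A : Matrix n n 𝕜} (hA : A.IsHermitian) :
    (A * A).trace = ∑ i, (hA.eigenvalues i : 𝕜) ^ 2 := by
  conv_lhs => rw [hA.spectral_theorem, ← map_mul, Unitary.conjStarAlgAut_apply, trace_mul_cycle,
    Unitary.coe_star_mul_self, one_mul, diagonal_mul_diagonal, trace_diagonal]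
  simp [sq]

theorem Matrix.IsHermitian.sum_sq_entries_eq_sum_sq_eigenvalues {n : Type*} [Fintype n]
    [DecidableEq n] {A : Matrix n n ℝ} (hA : A.IsHermitian) :
    ∑ i, ∑ j, A i j ^ 2 = ∑ i, hA.eigenvalues i ^ 2 := by
  rw [sum_sq_entries_eq_trace_mul_transpose, ← conjTranspose_eq_transpose_of_trivial, hA.eq,
    hA.trace_mul_self]
  rfl

theorem Matrix.IsHermitian.trace_eq_esymm_one {n : ℕ} {A : Matrix (Fin n) (Fin n) ℝ}
    (hA : A.IsHermitian) : A.trace = esymm n 1 hA.eigenvalues := by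
  simp [esymm, powersetCard_one, hA.trace_eq_sum_eigenvalues]

theorem Matrix.IsHermitian.sum_sq_entries_eq_esymm {n : ℕ} {A : Matrix (Fin n) (Fin n) ℝ}
    (hA : A.IsHermitian) :
    ∑ i, ∑ j, A i j ^ 2 = esymm n 1 hA.eigenvalues ^ 2 - 2 * esymm n 2 hA.eigenvalues := by
  rw [hA.sum_sq_entries_eq_sum_sq_eigenvalues, ← hA.trace_eq_esymm_one,
    hA.trace_eq_sum_eigenvalues, esymm, sq_sum_eq_sum_sq_add_two_mul_sum_powersetCard_two]
  simp

theorem stmt_13_general (n k : ℕ) (hk : 2 ≤ k) :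
    ∃ c : ℝ, 0 < c ∧
      ∀ (A : Matrix (Fin n) (Fin n) ℝ) (hA : A.IsHermitian),
        (∀ j : ℕ, 1 ≤ j → j ≤ k → 0 < esymm n j hA.eigenvalues) →
          0 < A.trace ∧ ∀ i j : Fin n, |A i j| ≤ c * A.trace := by
  refine ⟨1, one_pos, fun A hA hσ ↦ ?_⟩
  have htrace_pos : 0 < A.trace := hA.trace_eq_esymm_one ▸ hσ 1 le_rfl (by omega)
  have hfrobenius : ∑ i, ∑ j, A i j ^ 2 ≤ A.trace ^ 2 := by
    rw [hA.sum_sq_entries_eq_esymm, hA.trace_eq_esymm_one]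
    linarith [hσ 2 one_le_two hk]
  refine ⟨htrace_pos, fun i j ↦ ?_⟩
  rw [one_mul]
  exact abs_le_of_sq_le_sq ((A.sq_le_sum_sq_entries i j).trans hfrobenius) htrace_pos.le

theorem stmt_13 (n k : ℕ) (hk : 2 ≤ k) (hkn : k ≤ n) :
    ∃ c : ℝ, 0 < c ∧
      ∀ (A : Matrix (Fin n) (Fin n) ℝ) (hA : A.IsHermitian),
        (∀ j : ℕ, 1 ≤ j → j ≤ k → 0 < esymm n j hA.eigenvalues) →
          0 < A.trace ∧ ∀ i j : Fin n, |A i j| ≤ c * A.trace :=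
  stmt_13_general n k hk
end
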